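/- arXiv:2510.26291 — 4 statements merged into one kernel-verified Lean document; each statement's English description precedes it below -/
import Mathlib

section
/- For any odd integer n ≥ 1, the alternating sum ∑_{j=1}^{n} (-1)^{j+1} ⌊√(j·n)⌋ equals (n+1)/2. -/
/-!
`⌊√(jn)⌋` counts the `k ∈ [1, n]` with `k² ≤ jn`, i.e. with `⌈k²/n⌉ ≤ j`. Exchanging the two sums,
`k` contributes the tail `∑_{j=⌈k²/n⌉}^{n} (-1)^{j+1}`, which for odd `n` is `1` or `0` according to
the parity of `⌈k²/n⌉`. Since `(n-k)² = k² + n(n-2k)`, we get `⌈(n-k)²/n⌉ = ⌈k²/n⌉ + n - 2k`, of the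
opposite parity; so exactly one of `k, n-k` counts, and among `0 ≤ k ≤ n` that is `(n+1)/2` of them.
-/

open Finset

theorem Nat.sqrt_eq_card_filter_sq_le {m N : ℕ} (h : m ≤ N ^ 2) :
    Nat.sqrt m = #{k ∈ Icc 1 N | k ^ 2 ≤ m} := by
  have hsqrt : Nat.sqrt m ≤ N := (Nat.sqrt_le_sqrt h).trans (Nat.sqrt_eq' N).le
  have hfilter : {k ∈ Icc 1 N | k ^ 2 ≤ m} = Icc 1 (Nat.sqrt m) := by
    ext k
    simp only [mem_filter, mem_Icc, ← Nat.le_sqrt']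
    omega
  rw [hfilter, Nat.card_Icc, Nat.add_sub_cancel]

theorem sum_Icc_neg_one_pow_succ {m n : ℕ} (hn : Odd n) (hm : m ≤ n + 1) :
    ∑ j ∈ Icc m n, (-1 : ℤ) ^ (j + 1) = (m % 2 : ℕ) := by
  rw [← Ico_add_one_right_eq_Icc, sum_Ico_eq_sub _ hm]
  simp only [pow_succ, ← sum_mul, neg_one_geom_sum, hn.add_one, if_true]
  rcases Nat.even_or_odd m with h | h
  · simp [h, Nat.even_iff.mp h]
  · simp [Nat.not_even_iff_odd.mpr h, Nat.odd_iff.mp h]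

theorem two_nsmul_sum_range_of_add_reflect {M : Type*} [AddCommMonoid M] {f : ℕ → M} {n : ℕ}
    {a : M} (h : ∀ k ≤ n, f k + f (n - k) = a) :
    2 • ∑ k ∈ range (n + 1), f k = (n + 1) • a := by
  calc 2 • ∑ k ∈ range (n + 1), f k
      = ∑ k ∈ range (n + 1), (f k + f (n - k)) := by
        rw [two_nsmul, sum_add_distrib, ← sum_range_reflect f (n + 1)]
        simp only [Nat.add_sub_cancel]
    _ = (n + 1) • a := by
        rw [sum_congr rfl fun k hk ↦ h k (Nat.lt_succ_iff.mp (mem_range.mp hk)), sum_const,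
          card_range]

theorem Nat.add_mul_ceilDiv {a b n : ℕ} (hn : 0 < n) : (a + b * n) ⌈/⌉ n = a ⌈/⌉ n + b := by
  simp only [Nat.ceilDiv_eq_add_pred_div]
  rw [show a + b * n + n - 1 = a + n - 1 + b * n by omega, Nat.add_mul_div_right _ _ hn]

theorem odd_sq_ceilDiv_add_sub_sq_ceilDiv {n k : ℕ} (hn : Odd n) (hk : k ≤ n) :
    Odd (k ^ 2 ⌈/⌉ n + (n - k) ^ 2 ⌈/⌉ n) := by
  have hshift : (n - k) ^ 2 ⌈/⌉ n + 2 * k = k ^ 2 ⌈/⌉ n + n := by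
    rw [← Nat.add_mul_ceilDiv hn.pos, ← Nat.add_mul_ceilDiv hn.pos]
    obtain ⟨d, rfl⟩ := Nat.exists_eq_add_of_le hk
    rw [Nat.add_sub_cancel_left]
    ring_nf
  rw [Nat.odd_iff] at hn ⊢
  omega

theorem two_mul_sum_Icc_sq_ceilDiv_mod_two {n : ℕ} (hn : Odd n) :
    2 * ∑ k ∈ Icc 1 n, k ^ 2 ⌈/⌉ n % 2 = n + 1 := by
  have hpair := two_nsmul_sum_range_of_add_reflect (f := fun k ↦ k ^ 2 ⌈/⌉ n % 2) (a := 1)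
    fun k hk ↦ by
      have := Nat.odd_iff.mp (odd_sq_ceilDiv_add_sub_sq_ceilDiv hn hk)
      omega
  rwa [sum_range_eq_add_Ico _ n.succ_pos, Nat.succ_eq_add_one, Ico_add_one_right_eq_Icc,
    zero_pow two_ne_zero, zero_ceilDiv, Nat.zero_mod, zero_add, smul_eq_mul, smul_eq_mul,
    mul_one] at hpair

theorem sum_Icc_ite_le_mul_neg_one_pow {a n : ℕ} (hn : Odd n) (ha : 0 < a) (han : a ≤ n * n) :
    ∑ j ∈ Icc 1 n, (if a ≤ n * j then (-1 : ℤ) ^ (j + 1) else 0) = (a ⌈/⌉ n % 2 : ℕ) := by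
  have hpos := hn.pos
  have hlow : 1 ≤ a ⌈/⌉ n := by
    by_contra! h
    have := (ceilDiv_le_iff_le_mul hpos).mp (Nat.lt_one_iff.mp h).le
    omega
  have hfilter : {j ∈ Icc 1 n | a ≤ n * j} = Icc (a ⌈/⌉ n) n := by
    ext j
    simp only [mem_filter, mem_Icc, ← ceilDiv_le_iff_le_mul hpos]
    omega
  rw [← sum_filter, hfilter, sum_Icc_neg_one_pow_succ hn]
  exact ((ceilDiv_le_iff_le_mul hpos).mpr han).trans n.le_succ

theorem alternating_sum_floor_sqrt_general (n : ℕ) (hn : Odd n) :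
    ∑ j ∈ Finset.Icc 1 n, (-1 : ℤ) ^ (j + 1) * ⌊Real.sqrt (j * n)⌋ = (n + 1) / 2 := by
  have hfloor (j) (hj : j ∈ Icc 1 n) : (-1 : ℤ) ^ (j + 1) * ⌊√(j * n)⌋ =
      ∑ k ∈ Icc 1 n, if k ^ 2 ≤ n * j then (-1 : ℤ) ^ (j + 1) else 0 := by
    have hjn : j * n ≤ n ^ 2 := by rw [sq]; exact Nat.mul_le_mul_right n (mem_Icc.mp hj).2
    rw [← Nat.cast_mul, Real.floor_real_sqrt_eq_nat_sqrt, Nat.sqrt_eq_card_filter_sq_le hjn,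
      natCast_card_filter, mul_sum]
    simp only [mul_ite, mul_one, mul_zero, mul_comm j n]
  have hinner (k) (hk : k ∈ Icc 1 n) : ∑ j ∈ Icc 1 n,
      (if k ^ 2 ≤ n * j then (-1 : ℤ) ^ (j + 1) else 0) = (k ^ 2 ⌈/⌉ n % 2 : ℕ) := by
    obtain ⟨hk1, hkn⟩ := mem_Icc.mp hk
    exact sum_Icc_ite_le_mul_neg_one_pow hn (by positivity) (by nlinarith)
  rw [sum_congr rfl hfloor, sum_comm, sum_congr rfl hinner, ← Nat.cast_sum]
  have := two_mul_sum_Icc_sq_ceilDiv_mod_two hn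
  omega

theorem alternating_sum_floor_sqrt (n : ℕ) (hn : Odd n) (h1 : 1 ≤ n) :
    ∑ j ∈ Finset.Icc 1 n, (-1 : ℤ) ^ (j + 1) * ⌊Real.sqrt (j * n)⌋ = (n + 1) / 2 :=
  alternating_sum_floor_sqrt_general n hn
end

section
/- For any odd integer n ≥ 1, the number of integers k with 1 ≤ k ≤ n for which ⌈k²/n⌉ is odd equals (n+1)/2. -/
/-!
Write `c k = ⌈k² / n⌉`. Since `(n - k)² / n = k² / n + (n - 2k)` and `n - 2k` is an odd integer,
`c (n - k)` and `c k` have opposite parities. The involution `k ↦ n - k` of `{1, …, n - 1}` therefore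
pairs the `k` with `c k` odd with those with `c k` even, so exactly half of these `n - 1` numbers
count; and `k = n` counts as well, because `c n = n` is odd.
-/

theorem Finset.two_mul_card_filter_eq_card_of_involution {α : Type*} {s : Finset α}
    (p : α → Prop) [DecidablePred p] (f : α → α) (hmaps : Set.MapsTo f s s)
    (hinv : Set.LeftInvOn f f s) (hp : ∀ a ∈ s, p (f a) ↔ ¬ p a) :
    2 * (s.filter p).card = s.card := by
  rw [← s.card_filter_add_card_filter_not p, two_mul]
  congr 1
  apply Finset.card_nbij' f f
  · intro a ha
    simp only [Finset.coe_filter, Set.mem_ofPred_eq] at ha ⊢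
    exact ⟨hmaps ha.1, by simpa [hp a ha.1] using ha.2⟩
  · intro a ha
    simp only [Finset.coe_filter, Set.mem_ofPred_eq] at ha ⊢
    exact ⟨hmaps ha.1, (hp a ha.1).2 ha.2⟩
  · exact fun a ha => hinv (Finset.mem_filter.1 ha).1
  · exact fun a ha => hinv (Finset.mem_filter.1 ha).1

section Ceil

variable {K : Type*} [Field K] [LinearOrder K] [IsStrictOrderedRing K] [FloorRing K]

theorem Int.ceil_sub_sq_div (n k : ℤ) (hn : n ≠ 0) :
    ⌈((n : K) - k) ^ 2 / n⌉ = n - 2 * k + ⌈(k : K) ^ 2 / n⌉ := by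
  have hn' : (n : K) ≠ 0 := Int.cast_ne_zero.2 hn
  have h : ((n : K) - k) ^ 2 / n = (k : K) ^ 2 / n + ((n - 2 * k : ℤ) : K) := by
    field_simp
    push_cast
    ring
  rw [h, Int.ceil_add_intCast, add_comm]

theorem Nat.odd_ceil_sub_sq_div_iff {n : ℕ} (hn : Odd n) {k : ℕ} (hk : k ≤ n) :
    Odd ⌈(((n - k : ℕ) : K)) ^ 2 / n⌉ ↔ ¬ Odd ⌈(k : K) ^ 2 / n⌉ := by
  have hodd : Odd ((n : ℤ) - 2 * k) := (Int.odd_coe_nat n |>.2 hn).sub_even (even_two_mul _)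
  have h := Int.ceil_sub_sq_div (K := K) n k (by exact_mod_cast hn.pos.ne')
  push_cast [Nat.cast_sub hk] at h ⊢
  rw [h, Int.odd_add, iff_true_left hodd, Int.not_odd_iff_even]

end Ceil

theorem card_odd_ceil_sq_div_general (n : ℕ) (hn : Odd n) :
    ((Finset.Icc 1 n).filter (fun k : ℕ => Odd ⌈((k : ℚ) ^ 2 / (n : ℚ))⌉)).card = (n + 1) / 2 := by
  have hhalf : 2 * ((Finset.Icc 1 (n - 1)).filter
      (fun k : ℕ => Odd ⌈((k : ℚ) ^ 2 / (n : ℚ))⌉)).card = n - 1 := by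
    rw [Finset.two_mul_card_filter_eq_card_of_involution _ (n - ·)]
    · simp
    · intro k hk
      simp only [Finset.coe_Icc, Set.mem_Icc] at hk ⊢
      omega
    · intro k hk
      simp only [Finset.coe_Icc, Set.mem_Icc] at hk
      exact Nat.sub_sub_self (by omega)
    · intro k hk
      exact Nat.odd_ceil_sub_sq_div_iff hn ((Finset.mem_Icc.1 hk).2.trans (n.sub_le 1))
  have hn_odd : Odd ⌈((n : ℚ) ^ 2 / (n : ℚ))⌉ := by
    rw [sq, mul_div_cancel_right₀ _ (by exact_mod_cast hn.pos.ne'), Int.ceil_natCast]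
    exact_mod_cast hn
  rw [← Finset.insert_Icc_sub_one_right_eq_Icc hn.pos, Finset.filter_insert, if_pos hn_odd,
    Finset.card_insert_of_notMem (by simp only [Finset.mem_filter, Finset.mem_Icc]; omega)]
  obtain ⟨m, rfl⟩ := hn
  omega

theorem card_odd_ceil_sq_div (n : ℕ) (hn : Odd n) (h1 : 1 ≤ n) :
    ((Finset.Icc 1 n).filter (fun k : ℕ => Odd ⌈((k : ℚ) ^ 2 / (n : ℚ))⌉)).card = (n + 1) / 2 :=
  card_odd_ceil_sq_div_general n hn
end

section
/- For any odd integer n ≥ 1, ∑_{ℓ=1}^{(n-1)/2} ( ⌊√(2ℓ·n)⌋ − ⌊√((2ℓ−1)·n)⌋ ) = (n−1)/2. -/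
/-!
A positive integer `k` satisfies `(m - 1) n < k² ≤ m n` for exactly one `m`, namely `⌈k² / n⌉`,
so `⌊√(m n)⌋ - ⌊√((m - 1) n)⌋` counts the `k` with `⌈k² / n⌉ = m`, and the sum counts the
`k ∈ [1, n - 1]` with `⌈k² / n⌉` even. Since `(n - k)² = k² + n (n - 2k)`, the reflection
`k ↦ n - k` shifts `⌈k² / n⌉` by the odd number `n - 2k`, so it swaps the `k` with even and odd
`⌈k² / n⌉`, and each kind makes up half of the `n - 1` values.
-/

open Finset

namespace Nat

lemma add_mul_ceilDiv_s4 {b : ℕ} (hb : 0 < b) (a c : ℕ) : (a + b * c) ⌈/⌉ b = a ⌈/⌉ b + c := by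
  simp only [ceilDiv_eq_add_pred_div]
  rw [show a + b * c + b - 1 = a + b - 1 + b * c by omega, Nat.add_mul_div_left _ _ hb]

lemma ceilDiv_eq_iff {a b m : ℕ} (hb : 0 < b) (hm : 0 < m) :
    a ⌈/⌉ b = m ↔ (m - 1) * b < a ∧ a ≤ m * b := by
  have hle : m ≤ a ⌈/⌉ b ↔ ¬ a ⌈/⌉ b ≤ m - 1 := by omega
  rw [le_antisymm_iff, hle, ceilDiv_le_iff_le_mul hb, ceilDiv_le_iff_le_mul hb, not_le,
    mul_comm b, mul_comm b, and_comm]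

lemma card_filter_lt_sq_le {a b K : ℕ} (hbK : sqrt b ≤ K) :
    #{k ∈ Icc 1 K | a < k ^ 2 ∧ k ^ 2 ≤ b} = sqrt b - sqrt a := by
  have : {k ∈ Icc 1 K | a < k ^ 2 ∧ k ^ 2 ≤ b} = Ioc (sqrt a) (sqrt b) := by
    ext k
    simp only [mem_filter, mem_Icc, mem_Ioc, ← sqrt_lt', ← le_sqrt']
    omega
  rw [this, card_Ioc]

end Nat

namespace Finset

lemma card_filter_eq_card_filter_not_of_involutive {α : Type*} {s : Finset α}
    {p : α → Prop} [DecidablePred p] (σ : α → α) (hσ : ∀ x ∈ s, σ x ∈ s)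
    (hσσ : ∀ x ∈ s, σ (σ x) = x) (hp : ∀ x ∈ s, p (σ x) ↔ ¬ p x) :
    #{x ∈ s | p x} = #{x ∈ s | ¬ p x} := by
  apply card_nbij' σ σ <;> intro x hx <;> simp only [coe_filter, Set.mem_ofPred_eq] at hx ⊢
  · exact ⟨hσ x hx.1, fun h => (hp x hx.1).1 h hx.2⟩
  · exact ⟨hσ x hx.1, (hp x hx.1).2 hx.2⟩
  · exact hσσ x hx.1
  · exact hσσ x hx.1

lemma card_filter_even_eq_sum_card_filter_eq_two_mul {α : Type*} (s : Finset α) (f : α → ℕ)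
    (N : ℕ) (hf : ∀ x ∈ s, f x ∈ Icc 1 (2 * N + 1)) :
    #{x ∈ s | Even (f x)} = ∑ ℓ ∈ Icc 1 N, #{x ∈ s | f x = 2 * ℓ} := by
  rw [card_eq_sum_card_fiberwise (f := (f · / 2)) (t := Icc 1 N)]
  · refine sum_congr rfl fun ℓ _ => ?_
    rw [filter_filter]
    congr! 2 with x
    rw [Nat.even_iff]
    omega
  · intro x hx
    simp only [coe_filter, Set.mem_ofPred_eq, Nat.even_iff] at hx
    have := mem_Icc.1 (hf x hx.1)
    simp only [coe_Icc, Set.mem_Icc]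
    omega

end Finset

open Nat

section SquareCeilDiv

variable {n : ℕ}

lemma sub_sq_ceilDiv_add {k : ℕ} (hn : 0 < n) (hk : k ≤ n) :
    (n - k) ^ 2 ⌈/⌉ n + 2 * k = k ^ 2 ⌈/⌉ n + n := by
  have hsq : (n - k) ^ 2 + n * (2 * k) = k ^ 2 + n * n := by
    zify [hk]
    ring
  rw [← add_mul_ceilDiv_s4 hn, hsq, add_mul_ceilDiv_s4 hn]

lemma even_sub_sq_ceilDiv_iff {k : ℕ} (hn : Odd n) (hk : k ≤ n) :
    Even ((n - k) ^ 2 ⌈/⌉ n) ↔ ¬ Even (k ^ 2 ⌈/⌉ n) := by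
  have := sub_sq_ceilDiv_add hn.pos hk
  obtain ⟨t, rfl⟩ := hn
  simp only [even_iff]
  omega

lemma sq_ceilDiv_mem_Icc {k : ℕ} (hk : 0 < k) (hkn : k ≤ n) : k ^ 2 ⌈/⌉ n ∈ Icc 1 k := by
  have hn : 0 < n := by omega
  have hpos : ¬ k ^ 2 ⌈/⌉ n ≤ 0 := by
    rw [ceilDiv_le_iff_le_mul hn, mul_zero, not_le]
    positivity
  refine mem_Icc.2 ⟨by omega, (ceilDiv_le_iff_le_mul hn).2 ?_⟩
  rw [sq, mul_comm n]
  exact Nat.mul_le_mul_left k hkn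

lemma card_filter_even_sq_ceilDiv (hn : Odd n) :
    #{k ∈ Icc 1 (n - 1) | Even (k ^ 2 ⌈/⌉ n)} = (n - 1) / 2 := by
  have hsplit := card_filter_add_card_filter_not (s := Icc 1 (n - 1)) (Even <| · ^ 2 ⌈/⌉ n)
  rw [card_Icc] at hsplit
  suffices #{k ∈ Icc 1 (n - 1) | Even (k ^ 2 ⌈/⌉ n)} =
      #{k ∈ Icc 1 (n - 1) | ¬ Even (k ^ 2 ⌈/⌉ n)} by omega
  refine card_filter_eq_card_filter_not_of_involutive (n - ·) ?_ ?_ ?_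
  · intro k hk
    simp only [mem_Icc] at hk ⊢
    omega
  · intro k hk
    simp only [mem_Icc] at hk
    omega
  · intro k hk
    exact even_sub_sq_ceilDiv_iff hn (by simp only [mem_Icc] at hk; omega)

lemma card_filter_sq_ceilDiv_eq {m K : ℕ} (hn : 0 < n) (hm : 0 < m) (hK : sqrt (m * n) ≤ K) :
    #{k ∈ Icc 1 K | k ^ 2 ⌈/⌉ n = m} = sqrt (m * n) - sqrt ((m - 1) * n) := by
  simp only [ceilDiv_eq_iff hn hm]
  exact card_filter_lt_sq_le hK

lemma floor_sqrt_mul_sub_floor_sqrt_mul {m : ℕ} (hm : 0 < m) (hmn : m < n) :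
    ⌊√((m : ℝ) * n)⌋ - ⌊√(((m : ℝ) - 1) * n)⌋ = #{k ∈ Icc 1 (n - 1) | k ^ 2 ⌈/⌉ n = m} := by
  have hK : sqrt (m * n) ≤ n - 1 := by
    have : m * n < n ^ 2 := by rw [sq]; exact Nat.mul_lt_mul_of_pos_right hmn (by omega)
    have := sqrt_lt'.2 this
    omega
  have hcast : ((m : ℝ) - 1) * n = ((m - 1) * n : ℕ) := by push_cast [Nat.cast_sub hm]; ring
  rw [card_filter_sq_ceilDiv_eq (by omega) hm hK, Nat.cast_sub (sqrt_le_sqrt (by gcongr; omega)),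
    hcast, ← Nat.cast_mul, Real.floor_real_sqrt_eq_nat_sqrt, Real.floor_real_sqrt_eq_nat_sqrt]

end SquareCeilDiv

theorem sum_floor_sqrt_differences_general (n : ℕ) (hn : Odd n) :
    ∑ ℓ ∈ Finset.Icc 1 ((n - 1) / 2),
        (⌊Real.sqrt (2 * ℓ * n)⌋ - ⌊Real.sqrt ((2 * ℓ - 1) * n)⌋) = ((n : ℤ) - 1) / 2 := by
  have hn0 := hn.pos
  have hterm : ∀ ℓ ∈ Icc 1 ((n - 1) / 2), ⌊√(2 * ℓ * n : ℝ)⌋ - ⌊√((2 * ℓ - 1) * n : ℝ)⌋ =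
      (#{k ∈ Icc 1 (n - 1) | k ^ 2 ⌈/⌉ n = 2 * ℓ} : ℤ) := fun ℓ hℓ => by
    have hℓ' := mem_Icc.1 hℓ
    exact_mod_cast floor_sqrt_mul_sub_floor_sqrt_mul (m := 2 * ℓ) (by omega) (by omega)
  have hfib := card_filter_even_eq_sum_card_filter_eq_two_mul (Icc 1 (n - 1)) (· ^ 2 ⌈/⌉ n)
    ((n - 1) / 2) fun k hk => by
      have hk' := mem_Icc.1 hk
      have := mem_Icc.1 (sq_ceilDiv_mem_Icc (n := n) (k := k) (by omega) (by omega))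
      simp only [mem_Icc]
      omega
  rw [sum_congr rfl hterm, ← Nat.cast_sum, ← hfib, card_filter_even_sq_ceilDiv hn]
  omega

theorem sum_floor_sqrt_differences (n : ℕ) (hn : Odd n) (h1 : 1 ≤ n) :
    ∑ ℓ ∈ Finset.Icc 1 ((n - 1) / 2),
        (⌊Real.sqrt (2 * ℓ * n)⌋ - ⌊Real.sqrt ((2 * ℓ - 1) * n)⌋) = ((n : ℤ) - 1) / 2 :=
  sum_floor_sqrt_differences_general n hn
end

section
/- If p is a prime with p ≡ 1 (mod 4), then ∑_{j=1}^{(p-1)/4} ⌊√(j·p)⌋ = (p² − 1)/12. -/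
/-!
Write `p = 4m + 1`. The sum counts the lattice points `(j, y)` with `1 ≤ j ≤ m` and
`1 ≤ y ≤ √(jp)`, all of which have `y ≤ 2m`; counting by rows instead gives
`2m² - ∑_{y ≤ 2m} ⌊y²/p⌋`, and `p ∑ ⌊y²/p⌋ = ∑ y² - ∑ (y² mod p)`. The residues `y² mod p`,
`1 ≤ y ≤ 2m`, are the `2m` distinct nonzero squares mod `p`; as `-1` is a square they come in
pairs `r, p - r`, so they add up to `pm`.
-/

open Finset

namespace Nat

lemma six_mul_sum_Icc_sq (n : ℕ) : 6 * ∑ y ∈ Icc 1 n, y ^ 2 = n * (n + 1) * (2 * n + 1) := by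
  induction n with
  | zero => simp
  | succ k ih =>
    rw [sum_Icc_succ_top (by omega), Nat.mul_add, ih]
    ring

lemma sub_one_div_of_not_dvd {a n : ℕ} (h : ¬ n ∣ a) : (a - 1) / n = a / n := by
  obtain _ | a := a
  · simp
  · simp [Nat.succ_div, h]

lemma card_filter_sq_le {K a : ℕ} (h : sqrt a ≤ K) : #{y ∈ Icc 1 K | y ^ 2 ≤ a} = sqrt a := by
  have : {y ∈ Icc 1 K | y ^ 2 ≤ a} = Icc 1 (sqrt a) := by
    ext y
    simp only [mem_filter, mem_Icc, ← Nat.le_sqrt']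
    omega
  simp [this]

lemma card_filter_mul_lt {m n b : ℕ} (hn : 0 < n) (h : (b - 1) / n ≤ m) :
    #{j ∈ Icc 1 m | j * n < b} = (b - 1) / n := by
  have : {j ∈ Icc 1 m | j * n < b} = Icc 1 ((b - 1) / n) := by
    ext j
    have := Nat.le_div_iff_mul_le hn (x := j) (y := b - 1)
    have := Nat.le_mul_of_pos_right j hn
    simp only [mem_filter, mem_Icc]
    omega
  simp [this]

/-- Counting the lattice points `(j, y)` of `[1, m] × [1, √(mn)]` by columns and by rows. -/
lemma sum_sqrt_mul_add_sum_sub_one_div (m n : ℕ) :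
    ∑ j ∈ Icc 1 m, sqrt (j * n) + ∑ y ∈ Icc 1 (sqrt (m * n)), (y ^ 2 - 1) / n
      = m * sqrt (m * n) := by
  set K := sqrt (m * n)
  have hcol : ∀ j ∈ Icc 1 m, sqrt (j * n) + #{y ∈ Icc 1 K | j * n < y ^ 2} = K := by
    intro j hj
    have hjK : sqrt (j * n) ≤ K := Nat.sqrt_le_sqrt (Nat.mul_le_mul_right n (mem_Icc.mp hj).2)
    simp_rw [← not_le]
    rw [← card_filter_sq_le hjK, card_filter_add_card_filter_not, card_Icc, Nat.add_sub_cancel]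
  have hrow : ∀ y ∈ Icc 1 K, #{j ∈ Icc 1 m | j * n < y ^ 2} = (y ^ 2 - 1) / n := by
    intro y hy
    have hyK : y ^ 2 ≤ m * n := Nat.le_sqrt'.mp (mem_Icc.mp hy).2
    have hn : 0 < n := Nat.pos_of_ne_zero fun hn ↦ by
      have := (mem_Icc.mp hy).1
      simp [hn] at hyK
      omega
    exact card_filter_mul_lt hn (Nat.div_le_of_le_mul (by rw [mul_comm]; omega))
  calc ∑ j ∈ Icc 1 m, sqrt (j * n) + ∑ y ∈ Icc 1 K, (y ^ 2 - 1) / n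
      = ∑ j ∈ Icc 1 m, sqrt (j * n) + ∑ j ∈ Icc 1 m, #{y ∈ Icc 1 K | j * n < y ^ 2} := by
        rw [← sum_congr rfl hrow]
        exact congrArg _ (sum_card_bipartiteAbove_eq_sum_card_bipartiteBelow _).symm
    _ = m * K := by rw [← sum_add_distrib, sum_congr rfl hcol]; simp

end Nat

namespace ZMod

lemma two_mul_sum_val_of_neg_mem {n : ℕ} [NeZero n] {s : Finset (ZMod n)} (h0 : 0 ∉ s)
    (hneg : ∀ x ∈ s, -x ∈ s) : 2 * ∑ x ∈ s, x.val = #s * n := by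
  have hval : ∀ x ∈ s, x.val + (-x).val = n := fun x hx ↦ by
    rw [neg_val, if_neg (ne_of_mem_of_not_mem hx h0)]
    have := x.val_lt
    omega
  have hflip : ∑ x ∈ s, x.val = ∑ x ∈ s, (-x).val :=
    sum_nbij' (- ·) (- ·) hneg hneg (by simp) (by simp) (by simp)
  rw [two_mul]
  nth_rw 2 [hflip]
  rw [← sum_add_distrib, sum_congr rfl hval, sum_const, smul_eq_mul]

lemma natCast_ne_zero_of_mem_Icc_half {n y : ℕ} (hy : y ∈ Icc 1 (n / 2)) :
    (y : ZMod n) ≠ 0 := by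
  rw [Ne, natCast_eq_zero_iff]
  have := mem_Icc.mp hy
  exact Nat.not_dvd_of_pos_of_lt (by omega) (by omega)

lemma exists_natCast_sq_eq_sq {n : ℕ} [NeZero n] {x : ZMod n} (hx : x ≠ 0) :
    ∃ y ∈ Icc 1 (n / 2), (y : ZMod n) ^ 2 = x ^ 2 := by
  refine ⟨x.valMinAbs.natAbs, mem_Icc.mpr ⟨?_, natAbs_valMinAbs_le x⟩, ?_⟩
  · simpa [Nat.one_le_iff_ne_zero, valMinAbs_eq_zero] using hx
  · rw [natCast_natAbs_valMinAbs]
    split_ifs <;> simp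

variable {p : ℕ} [Fact p.Prime]

lemma injOn_natCast_sq_Icc_half : Set.InjOn (fun y : ℕ ↦ (y : ZMod p) ^ 2) (Icc 1 (p / 2)) := by
  intro y hy z hz h
  simp only [coe_Icc, Set.mem_Icc] at hy hz
  rcases sq_eq_sq_iff_eq_or_eq_neg.mp h with h | h
  · have := (natCast_eq_natCast_iff' y z p).mp h
    rwa [Nat.mod_eq_of_lt (by omega), Nat.mod_eq_of_lt (by omega)] at this
  · rw [eq_neg_iff_add_eq_zero, ← Nat.cast_add, natCast_eq_zero_iff] at h
    have := Nat.le_of_dvd (by omega) h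
    omega

lemma two_mul_sum_sq_mod (h : IsSquare (-1 : ZMod p)) :
    2 * ∑ y ∈ Icc 1 (p / 2), y ^ 2 % p = p / 2 * p := by
  classical
  obtain ⟨i, hi⟩ := h
  set s := (Icc 1 (p / 2)).image fun y : ℕ ↦ (y : ZMod p) ^ 2
  have h0 : 0 ∉ s := by
    simp only [s, mem_image, not_exists, not_and]
    exact fun y hy ↦ pow_ne_zero 2 (natCast_ne_zero_of_mem_Icc_half hy)
  have hneg : ∀ x ∈ s, -x ∈ s := by
    simp only [s, mem_image, forall_exists_index, and_imp, forall_apply_eq_imp_iff₂]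
    intro y hy
    have hi0 : i ≠ 0 := by rintro rfl; simp at hi
    obtain ⟨z, hz, hzy⟩ :=
      exists_natCast_sq_eq_sq (mul_ne_zero hi0 (natCast_ne_zero_of_mem_Icc_half hy))
    refine ⟨z, hz, ?_⟩
    rw [hzy, mul_pow, sq i, ← hi]
    ring
  have hcard : #s = p / 2 := by
    rw [card_image_of_injOn injOn_natCast_sq_Icc_half, Nat.card_Icc, Nat.add_sub_cancel]
  have hsum : ∑ y ∈ Icc 1 (p / 2), y ^ 2 % p = ∑ x ∈ s, x.val := by
    rw [sum_image injOn_natCast_sq_Icc_half]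
    simp [← val_natCast]
  rw [hsum, two_mul_sum_val_of_neg_mem h0 hneg, hcard]

end ZMod

theorem Nat.Prime.twelve_mul_sum_sqrt_mul_add_one {p : ℕ} (hp : p.Prime) (h4 : p % 4 = 1) :
    12 * ∑ j ∈ Icc 1 ((p - 1) / 4), Nat.sqrt (j * p) + 1 = p ^ 2 := by
  have := Fact.mk hp
  set m := (p - 1) / 4
  have hpm : p = 4 * m + 1 := by omega
  have hsqrt : Nat.sqrt (m * p) = 2 * m := by
    refine le_antisymm (Nat.lt_succ_iff.mp (Nat.sqrt_lt'.mpr ?_)) (Nat.le_sqrt'.mpr ?_) <;>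
      rw [hpm] <;> nlinarith
  have hdiv : ∀ y ∈ Icc 1 (2 * m), (y ^ 2 - 1) / p = y ^ 2 / p := fun y hy ↦
    Nat.sub_one_div_of_not_dvd fun h ↦ by
      have := Nat.le_of_dvd (mem_Icc.mp hy).1 (hp.dvd_of_dvd_pow h)
      have := (mem_Icc.mp hy).2
      omega
  have hlattice := Nat.sum_sqrt_mul_add_sum_sub_one_div m p
  rw [hsqrt, sum_congr rfl hdiv] at hlattice
  have hdivmod : p * ∑ y ∈ Icc 1 (2 * m), y ^ 2 / p + ∑ y ∈ Icc 1 (2 * m), y ^ 2 % p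
      = ∑ y ∈ Icc 1 (2 * m), y ^ 2 := by
    rw [mul_sum, ← sum_add_distrib]
    exact sum_congr rfl fun y _ ↦ Nat.div_add_mod _ _
  have hres := ZMod.two_mul_sum_sq_mod (ZMod.exists_sq_eq_neg_one_iff (p := p) |>.mpr (by omega))
  rw [show p / 2 = 2 * m by omega] at hres
  have hsq := Nat.six_mul_sum_Icc_sq (2 * m)
  apply Nat.eq_of_mul_eq_mul_left hp.pos
  clear_value m
  subst hpm
  zify at hlattice hdivmod hres hsq ⊢
  linear_combination 12 * (4 * (m : ℤ) + 1) * hlattice - 12 * hdivmod + 6 * hres - 2 * hsq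

theorem polya_szego_sum_floor_sqrt (p : ℕ) (hp : p.Prime) (h4 : p % 4 = 1) :
    ∑ j ∈ Finset.Icc 1 ((p - 1) / 4), ⌊Real.sqrt (j * p)⌋ = ((p : ℤ) ^ 2 - 1) / 12 := by
  have hfloor : ∀ j ∈ Icc 1 ((p - 1) / 4), ⌊Real.sqrt (j * p)⌋ = (Nat.sqrt (j * p) : ℤ) :=
    fun j _ ↦ by exact_mod_cast Real.floor_real_sqrt_eq_nat_sqrt (a := j * p)
  rw [sum_congr rfl hfloor, ← Nat.cast_sum, ← Nat.cast_pow,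
    ← hp.twelve_mul_sum_sqrt_mul_add_one h4]
  push_cast
  omega
end
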